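/- arXiv:1711.08082 — 2 statements merged into one kernel-verified Lean document; each statement's English description precedes it below -/
import Mathlib

section
/- For every positive integer n and every real x ≥ 0, P(∑_{i=1}^n z_i² ≤ n − 2√(n x)) ≤ exp(−x). -/
/-!
Chernoff bound at the parameter `-s`, `s = √(x / n)`: the coordinates are independent with
`E[exp (-s z²)] = (1 + 2s)^(-1/2)`, and the resulting exponent
`s (n - 2√(n x)) - (n/2) log (1 + 2s)` is at most `-x` because `log (1 + u) ≥ u - u² / 2`
for `u = 2s ≥ 0`.
-/

open MeasureTheory ProbabilityTheory

/-- The law of a random vector of `n` i.i.d. standard real Gaussians. -/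
noncomputable def stdGaussianPi (n : ℕ) : Measure (Fin n → ℝ) :=
  Measure.pi fun _ => gaussianReal 0 1

open Real

lemma Real.sub_sq_div_two_le_log_one_add {u : ℝ} (hu : 0 ≤ u) :
    u - u ^ 2 / 2 ≤ log (1 + u) := by
  refine le_trans ?_ (le_log_one_add_of_nonneg hu)
  rw [le_div_iff₀ (by linarith)]
  nlinarith [pow_nonneg hu 3]

lemma Real.exp_sub_sq_le_sqrt_one_add_two_mul {s : ℝ} (hs : 0 ≤ s) :
    exp (s - s ^ 2) ≤ √(1 + 2 * s) := by
  rw [le_sqrt (exp_nonneg _) (by linarith), ← exp_nat_mul, ← le_log_iff_exp_le (by linarith)]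
  convert sub_sq_div_two_le_log_one_add (mul_nonneg zero_le_two hs) using 1
  ring

/-- For `2 * t ≥ 1` both sides are junk `0`: `exp (t * y ^ 2)` is not integrable, and `√` of a
nonpositive number is `0`. -/
lemma mgf_sq_gaussianReal (t : ℝ) :
    mgf (· ^ 2) (gaussianReal 0 1) t = (√(1 - 2 * t))⁻¹ := by
  have h2π : 0 < 2 * π := by positivity
  rw [mgf, integral_gaussianReal_eq_integral_smul one_ne_zero]
  simp only [gaussianPDFReal, smul_eq_mul, NNReal.coe_one, mul_one, sub_zero, mul_assoc,
    ← exp_add]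
  have hexponent (y : ℝ) : -y ^ 2 / 2 + t * y ^ 2 = -(1 / 2 - t) * y ^ 2 := by ring
  simp only [hexponent, integral_const_mul, integral_gaussian]
  rw [← sqrt_inv, ← sqrt_mul (inv_nonneg.2 h2π.le), ← sqrt_inv]
  congr 1
  field_simp

instance isProbabilityMeasure_stdGaussianPi (n : ℕ) :
    IsProbabilityMeasure (stdGaussianPi n) := by
  unfold stdGaussianPi
  infer_instance

lemma stdGaussianPi_map_eval (n : ℕ) (i : Fin n) :
    (stdGaussianPi n).map (fun z => z i) = gaussianReal 0 1 :=
  (measurePreserving_eval _ i).map_eq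

lemma mgf_sum_sq_stdGaussianPi (n : ℕ) (t : ℝ) :
    mgf (fun z => ∑ i, z i ^ 2) (stdGaussianPi n) t = (√(1 - 2 * t))⁻¹ ^ n := by
  have hindep : iIndepFun (fun i (z : Fin n → ℝ) => z i ^ 2) (stdGaussianPi n) :=
    iIndepFun_pi (X := fun _ y => y ^ 2) fun _ => by fun_prop
  have hsum : (fun z : Fin n → ℝ => ∑ i, z i ^ 2) = ∑ i, fun z => z i ^ 2 := by
    ext z; simp
  rw [hsum, hindep.mgf_sum (fun i => by fun_prop), ← mgf_sq_gaussianReal,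
    Finset.prod_eq_pow_card (b := mgf (· ^ 2) (gaussianReal 0 1) t) fun i _ => ?_,
    Finset.card_fin]
  rw [← stdGaussianPi_map_eval n i]
  exact (mgf_map (X := (· ^ 2)) (measurable_pi_apply i).aemeasurable
    (by fun_prop : Continuous fun y : ℝ => exp (t * y ^ 2)).aestronglyMeasurable).symm

lemma stdGaussianPi_real_sum_sq_le_le_exp_mul (n : ℕ) {s : ℝ} (hs : 0 ≤ s) (c : ℝ) :
    (stdGaussianPi n).real {z | ∑ i, z i ^ 2 ≤ c} ≤
      exp (s * c) * (√(1 + 2 * s))⁻¹ ^ n := by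
  have hint :
      Integrable (fun z : Fin n → ℝ => exp (-s * ∑ i, z i ^ 2)) (stdGaussianPi n) := by
    refine Integrable.of_bound (by fun_prop : Continuous _).aestronglyMeasurable 1
      (ae_of_all _ fun z => ?_)
    rw [norm_of_nonneg (exp_nonneg _), exp_le_one_iff]
    exact mul_nonpos_of_nonpos_of_nonneg (neg_nonpos.2 hs) (by positivity)
  have hchernoff := measure_le_le_exp_mul_mgf c (neg_nonpos.2 hs) hint
  rwa [mgf_sum_sq_stdGaussianPi, neg_neg, mul_neg, sub_neg_eq_add] at hchernoff

lemma exp_mul_sub_two_mul_mul_inv_sqrt_pow_le (n : ℕ) {s : ℝ} (hs : 0 ≤ s) :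
    exp (s * (n - 2 * (n * s))) * (√(1 + 2 * s))⁻¹ ^ n ≤ exp (-(n * s ^ 2)) := by
  have hpos : 0 < √(1 + 2 * s) ^ n := pow_pos (sqrt_pos.2 (by linarith)) n
  rw [inv_pow, ← div_eq_mul_inv, div_le_iff₀ hpos,
    show s * (n - 2 * (n * s)) = -(n * s ^ 2) + n * (s - s ^ 2) by ring, exp_add, exp_nat_mul]
  gcongr
  exact exp_sub_sq_le_sqrt_one_add_two_mul hs

/-- Lower tail bound for the chi-squared distribution with `n` degrees of freedom
(Laurent–Massart): `P(χ²_n ≤ n - 2√(n x)) ≤ exp (-x)`. -/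
theorem chiSq_lower_tail (n : ℕ) (hn : 0 < n) (x : ℝ) (hx : 0 ≤ x) :
    stdGaussianPi n
        {z | ∑ i, z i ^ 2 ≤ (n : ℝ) - 2 * Real.sqrt (n * x)}
      ≤ ENNReal.ofReal (Real.exp (-x)) := by
  set s := √(x / n)
  have hs : 0 ≤ s := sqrt_nonneg _
  have hx_eq : x = n * s ^ 2 := by
    rw [sq_sqrt (by positivity)]
    field_simp
  have hsqrt : √(n * x) = n * s := by
    rw [hx_eq, show (n : ℝ) * (n * s ^ 2) = (n * s) ^ 2 by ring, sqrt_sq (by positivity)]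
  rw [← ofReal_measureReal]
  refine ENNReal.ofReal_le_ofReal ?_
  calc _ ≤ exp (s * (n - 2 * √(n * x))) * (√(1 + 2 * s))⁻¹ ^ n :=
        stdGaussianPi_real_sum_sq_le_le_exp_mul n hs _
    _ ≤ exp (-x) := by
        rw [hsqrt, hx_eq]
        exact exp_mul_sub_two_mul_mul_inv_sqrt_pow_le n hs
end

section
/- For every positive integer n, every vector a ∈ ℝⁿ with λ := ∑_{i=1}^n a_i², and every real x ≥ 0, P(∑_{i=1}^n (z_i + a_i)² ≤ (n + λ) − 2√((n + 2λ) x)) ≤ exp(−x). -/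
/-!
Chernoff's method applied to the lower tail. For `t ≥ 0` the moment generating function of
`(z + c)²` with `z ~ N(0, 1)` at `-t` is `(1 + 2t)^(-1/2) exp (-t c² / (1 + 2t))`, which is at
most `exp (-t (1 + c²) + t² (1 + 2c²))`. Multiplying over the independent coordinates bounds the
mgf of the sum by `exp (-t (n + λ) + t² (n + 2λ))`, so the probability of the event is at most
`exp (-2t √((n + 2λ) x) + t² (n + 2λ))`, which equals `exp (-x)` for `t = √(x / (n + 2λ))`.
-/

open MeasureTheory ProbabilityTheory

open Real

instance (n : ℕ) : IsProbabilityMeasure (stdGaussianPi n) := by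
  unfold stdGaussianPi; infer_instance

theorem mgf_pi_sum {ι : Type*} [Fintype ι] {Ω : ι → Type*} [∀ i, MeasurableSpace (Ω i)]
    (μ : (i : ι) → Measure (Ω i)) [∀ i, SigmaFinite (μ i)] (X : (i : ι) → Ω i → ℝ)
    (t : ℝ) :
    mgf (fun ω => ∑ i, X i (ω i)) (Measure.pi μ) t = ∏ i, mgf (X i) (μ i) t := by
  simp only [mgf, Finset.mul_sum, exp_sum]
  exact integral_fintype_prod_eq_prod (fun i y => exp (t * X i y))

theorem mgf_sq_add_gaussianReal (c : ℝ) {t : ℝ} (ht : t < 1 / 2) :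
    mgf (fun y => (y + c) ^ 2) (gaussianReal 0 1) t =
      (√(1 - 2 * t))⁻¹ * exp (t * c ^ 2 / (1 - 2 * t)) := by
  have h2t : 0 < 1 - 2 * t := by linarith
  set b := (1 - 2 * t) / 2
  -- completing the square in the exponent of the integrand
  have hsq (y : ℝ) : gaussianPDFReal 0 1 y • exp (t * (y + c) ^ 2) = (√(2 * π))⁻¹ *
      exp (t * c ^ 2 / (1 - 2 * t)) * exp (-b * (y + -(2 * t * c / (1 - 2 * t))) ^ 2) := by
    rw [gaussianPDFReal_def, smul_eq_mul, mul_assoc, ← exp_add, mul_assoc (√(2 * π))⁻¹,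
      ← exp_add]
    simp only [NNReal.coe_one, mul_one, sub_zero]
    congr 2
    field_simp
    ring
  rw [mgf, integral_gaussianReal_eq_integral_smul one_ne_zero]
  simp_rw [hsq]
  rw [integral_const_mul, integral_add_right_eq_self (fun y => exp (-b * y ^ 2)), integral_gaussian,
    mul_right_comm, inv_mul_eq_div, ← sqrt_div' _ (by positivity), ← sqrt_inv]
  congr 2
  field_simp [b]
  ring

theorem inv_sqrt_one_add_two_mul_le_exp {t : ℝ} (ht : 0 ≤ t) :
    (√(1 + 2 * t))⁻¹ ≤ exp (-t + t ^ 2) := by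
  have hlog : 2 * t - 2 * t ^ 2 ≤ log (1 + 2 * t) := calc
    2 * t - 2 * t ^ 2 ≤ 2 * (2 * t) / (2 * t + 2) := by
      rw [le_div_iff₀ (by positivity)]
      nlinarith [pow_nonneg ht 3]
    _ ≤ log (1 + 2 * t) := le_log_one_add_of_nonneg (by positivity)
  rw [← exp_log (by positivity : 0 < √(1 + 2 * t)), ← exp_neg, exp_le_exp,
    log_sqrt (by positivity)]
  linarith

theorem mgf_sq_add_gaussianReal_neg_le (c : ℝ) {t : ℝ} (ht : 0 ≤ t) :
    mgf (fun y => (y + c) ^ 2) (gaussianReal 0 1) (-t) ≤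
      exp (-t * (1 + c ^ 2) + t ^ 2 * (1 + 2 * c ^ 2)) := by
  rw [mgf_sq_add_gaussianReal c (by linarith), show 1 - 2 * -t = 1 + 2 * t by ring]
  have hexp : exp (-t * c ^ 2 / (1 + 2 * t)) ≤ exp (-t * c ^ 2 + 2 * t ^ 2 * c ^ 2) := by
    rw [exp_le_exp, div_le_iff₀ (by positivity)]
    nlinarith [mul_nonneg (pow_nonneg ht 3) (sq_nonneg c)]
  calc (√(1 + 2 * t))⁻¹ * exp (-t * c ^ 2 / (1 + 2 * t))
      ≤ exp (-t + t ^ 2) * exp (-t * c ^ 2 + 2 * t ^ 2 * c ^ 2) :=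
        mul_le_mul (inv_sqrt_one_add_two_mul_le_exp ht) hexp (by positivity) (by positivity)
    _ = _ := by rw [← exp_add]; ring_nf

theorem mgf_sum_sq_add_stdGaussianPi_neg_le (n : ℕ) (a : Fin n → ℝ) {t : ℝ} (ht : 0 ≤ t) :
    mgf (fun z => ∑ i, (z i + a i) ^ 2) (stdGaussianPi n) (-t) ≤
      exp (-t * (n + ∑ i, a i ^ 2) + t ^ 2 * (n + 2 * ∑ i, a i ^ 2)) := calc
  _ = ∏ i, mgf (fun y => (y + a i) ^ 2) (gaussianReal 0 1) (-t) :=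
      mgf_pi_sum _ (fun i y => (y + a i) ^ 2) (-t)
  _ ≤ ∏ i, exp (-t * (1 + a i ^ 2) + t ^ 2 * (1 + 2 * a i ^ 2)) :=
      Finset.prod_le_prod (fun i _ => mgf_nonneg) fun i _ => mgf_sq_add_gaussianReal_neg_le (a i) ht
  _ = _ := by
      rw [← exp_sum]
      simp only [Finset.sum_add_distrib, ← Finset.mul_sum]
      simp

/-- Lower tail bound for the noncentral chi-squared distribution with `n` degrees of
freedom and noncentrality `λ = ∑ i, a i ^ 2` (Birgé):
`P(χ²_n(λ) ≤ (n + λ) - 2√((n + 2λ) x)) ≤ exp (-x)`. -/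
theorem noncentral_chiSq_lower_tail (n : ℕ) (hn : 0 < n) (a : Fin n → ℝ)
    (lam : ℝ) (hlam : lam = ∑ i, a i ^ 2) (x : ℝ) (hx : 0 ≤ x) :
    stdGaussianPi n
        {z | ∑ i, (z i + a i) ^ 2
              ≤ ((n : ℝ) + lam) - 2 * Real.sqrt (((n : ℝ) + 2 * lam) * x)}
      ≤ ENNReal.ofReal (Real.exp (-x)) := by
  set s := (n : ℝ) + 2 * lam
  have hs : 0 < s := by
    have : 0 ≤ lam := hlam ▸ Finset.sum_nonneg fun i _ => sq_nonneg (a i)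
    have : (1 : ℝ) ≤ n := by exact_mod_cast hn
    positivity
  -- the optimal Chernoff parameter
  set t := √(x / s)
  have ht : 0 ≤ t := sqrt_nonneg _
  have hts : t ^ 2 * s = x := by rw [sq_sqrt (by positivity), div_mul_cancel₀ _ hs.ne']
  have htsx : t * √(s * x) = x := by
    rw [← sqrt_mul (by positivity), show x / s * (s * x) = x ^ 2 by field_simp, sqrt_sq hx]
  have hint : Integrable (fun z => exp (-t * ∑ i, (z i + a i) ^ 2)) (stdGaussianPi n) := by
    refine .of_bound (Measurable.aestronglyMeasurable (by fun_prop)) 1 (.of_forall fun z => ?_)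
    rw [norm_of_nonneg (exp_nonneg _), exp_le_one_iff, neg_mul, neg_nonpos]
    positivity
  rw [← ofReal_measureReal]
  refine ENNReal.ofReal_le_ofReal ?_
  calc _ ≤ exp (- -t * (n + lam - 2 * √(s * x))) *
          mgf (fun z => ∑ i, (z i + a i) ^ 2) (stdGaussianPi n) (-t) :=
        measure_le_le_exp_mul_mgf _ (neg_nonpos.mpr ht) hint
    _ ≤ exp (- -t * (n + lam - 2 * √(s * x))) * exp (-t * (n + lam) + t ^ 2 * s) := by
        gcongr
        simpa only [s, hlam] using mgf_sum_sq_add_stdGaussianPi_neg_le n a ht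
    _ = exp (-x) := by
        rw [← exp_add]
        congr 1
        linear_combination hts - 2 * htsx
end
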